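/- Let H be a Hopf algebra with character δ, A a left H-module algebra, and τ : A → k a σ-trace for a grouplike σ ∈ H (i.e., τ(ab) = τ(b·σ(a))). Then τ is δ-invariant (τ(h(a)) = δ(h)τ(a) for all h, a) if and only if the integration by parts formula holds: τ(h(a)·b) = τ(a·S̃_δ(h)(b)) for all h ∈ H and a, b ∈ A, where S̃_δ(h) = δ(h^(1))S(h^(2)). -/

import Mathlib

/-!
In any `H`-module algebra, coassociativity and `h⁽¹⁾ S(h⁽²⁾) = ε(h)` give
`h(a) · b = h⁽¹⁾(a · S(h⁽²⁾)(b))`. Applying a `δ`-invariant `τ` turns the right side into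
`δ(h⁽¹⁾) τ(a · S(h⁽²⁾)(b)) = τ(a · S̃_δ(h)(b))`. Conversely, taking `b = 1` in the integration by
parts formula gives `τ(h(a)) = ε(S̃_δ(h)) τ(a) = δ(h) τ(a)`.
-/

open TensorProduct

/-- The `δ`-twisted antipode `S̃_δ = δ * S`, i.e. `S̃_δ(h) = δ(h⁽¹⁾) S(h⁽²⁾)`. -/
noncomputable def twistedAntipode {k H : Type*} [CommSemiring k] [Semiring H]
    [HopfAlgebra k H] (δ : H →ₐ[k] k) : H →ₗ[k] H :=
  LinearMap.mul' k H ∘ₗ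
    TensorProduct.map (Algebra.linearMap k H ∘ₗ δ.toLinearMap) (HopfAlgebra.antipode (R := k)) ∘ₗ
    Coalgebra.comul

open Coalgebra HopfAlgebra

lemma Coalgebra.sum_counit_right_smul {k C : Type*} [CommSemiring k] [AddCommMonoid C]
    [Module k C] [Coalgebra k C] {c : C} {ι : Type*} (r : Repr k c ι) :
    ∑ i ∈ r.index, counit (R := k) (r.right i) • r.left i = c := by
  simpa only [map_sum, lift.tmul, LinearMap.flip_apply, LinearMap.lsmul_apply, one_smul]
    using congr(TensorProduct.lift (LinearMap.lsmul k C).flip $(sum_tmul_counit_eq r))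

section TwistedAntipode

variable {k H : Type*} [CommSemiring k] [Semiring H] [HopfAlgebra k H] (δ : H →ₐ[k] k)

lemma twistedAntipode_eq_sum {h : H} {ι : Type*} (r : Repr k h ι) :
    twistedAntipode δ h = ∑ i ∈ r.index, δ (r.left i) • antipode k (r.right i) := by
  simp [twistedAntipode, ← r.eq, map_sum, LinearMap.mul'_apply, Algebra.smul_def]

lemma counit_twistedAntipode (h : H) : counit (R := k) (twistedAntipode δ h) = δ h := by
  conv_rhs => rw [← sum_counit_right_smul (ℛ k h)]
  simp [twistedAntipode_eq_sum δ (ℛ k h), map_sum, mul_comm]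

end TwistedAntipode

section ModuleAlgebra

variable {k H A : Type*} [CommSemiring k] [Semiring H] [HopfAlgebra k H] [Semiring A]
  [Algebra k A] {act : H →ₗ[k] A →ₗ[k] A}

lemma act_mul_eq_sum
    (hma_mul : ∀ (h : H) (a b : A), act h (a * b) =
      LinearMap.mul' k A (TensorProduct.map (act.flip a) (act.flip b) (comul h)))
    {h : H} {ι : Type*} (r : Repr k h ι) (a b : A) :
    act h (a * b) = ∑ i ∈ r.index, act (r.left i) a * act (r.right i) b := by
  simp [hma_mul, ← r.eq, map_sum, LinearMap.mul'_apply]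

theorem act_mul_eq_sum_act_mul_act_antipode
    (hact_mul : ∀ (g h : H) (a : A), act (g * h) a = act g (act h a))
    (hact_one : ∀ a : A, act 1 a = a)
    (hma_mul : ∀ (h : H) (a b : A), act h (a * b) =
      LinearMap.mul' k A (TensorProduct.map (act.flip a) (act.flip b) (comul h)))
    {h : H} {ι : Type*} (r : Repr k h ι) (a b : A) :
    act h a * b = ∑ i ∈ r.index, act (r.left i) (a * act (antipode k (r.right i)) b) := by
  -- `Φ (x ⊗ y ⊗ z) = x(a) · (y S(z))(b)`, evaluated on both sides of coassociativity
  let Φ : H ⊗[k] (H ⊗[k] H) →ₗ[k] A := LinearMap.mul' k A ∘ₗ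
    TensorProduct.map (act.flip a) (act.flip b ∘ₗ LinearMap.mul' k H ∘ₗ (antipode k).lTensor H)
  have coassoc := congr(Φ $(sum_tmul_tmul_eq r (fun i ↦ ℛ k (r.left i)) (fun i ↦ ℛ k (r.right i))))
  simp only [Φ, map_sum, LinearMap.comp_apply, map_tmul, LinearMap.lTensor_tmul,
    LinearMap.mul'_apply, LinearMap.flip_apply] at coassoc
  calc act h a * b = ∑ i ∈ r.index, act (r.left i) a * (counit (R := k) (r.right i) • b) := by
        conv_lhs => rw [← sum_counit_right_smul r]
        simp [map_sum, Finset.sum_mul]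
    _ = _ := Finset.sum_congr rfl fun i _ ↦ by
        rw [← Finset.mul_sum, ← LinearMap.sum_apply, ← map_sum, sum_mul_antipode_eq_smul,
          map_smul, LinearMap.smul_apply, hact_one]
    _ = _ := coassoc.symm
    _ = _ := by simp [act_mul_eq_sum hma_mul (ℛ k (r.left _)), hact_mul]

end ModuleAlgebra

theorem delta_invariant_iff_integration_by_parts_general {k H A : Type*} [Field k] [Ring H]
    [HopfAlgebra k H] [Ring A] [Algebra k A]
    (δ : H →ₐ[k] k)
    (act : H →ₗ[k] A →ₗ[k] A)
    (hact_mul : ∀ (g h : H) (a : A), act (g * h) a = act g (act h a))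
    (hact_one : ∀ a : A, act 1 a = a)
    (hma_mul : ∀ (h : H) (a b : A), act h (a * b) =
      LinearMap.mul' k A (TensorProduct.map (act.flip a) (act.flip b) (Coalgebra.comul h)))
    (hma_one : ∀ h : H, act h 1 = Coalgebra.counit (R := k) h • (1 : A))
    (τ : A →ₗ[k] k) :
    (∀ (h : H) (a : A), τ (act h a) = δ h * τ a) ↔
      (∀ (h : H) (a b : A), τ (act h a * b) = τ (a * act (twistedAntipode δ h) b)) := by
  constructor
  · intro hinv h a b
    rw [act_mul_eq_sum_act_mul_act_antipode hact_mul hact_one hma_mul (ℛ k h),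
      twistedAntipode_eq_sum δ (ℛ k h)]
    simp [map_sum, hinv, Finset.mul_sum]
  · intro hibp h a
    rw [← mul_one (act h a), hibp, hma_one, counit_twistedAntipode, mul_smul_comm, mul_one,
      map_smul, smul_eq_mul]

/-- (Integration by parts formula.) Let `H` be a Hopf algebra with character `δ`, `A` a unital
left `H`-module algebra, `σ ∈ H` grouplike, and `τ : A → k` a `σ`-trace
(`τ(ab) = τ(b·σ(a))`).  Then `τ` is `δ`-invariant (`τ(h(a)) = δ(h)τ(a)`) if and only if
`τ(h(a)·b) = τ(a·S̃_δ(h)(b))` for all `h ∈ H`, `a, b ∈ A`. -/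
theorem delta_invariant_iff_integration_by_parts {k H A : Type*} [Field k] [Ring H]
    [HopfAlgebra k H] [Ring A] [Algebra k A]
    (δ : H →ₐ[k] k)
    (act : H →ₗ[k] A →ₗ[k] A)
    (hact_mul : ∀ (g h : H) (a : A), act (g * h) a = act g (act h a))
    (hact_one : ∀ a : A, act 1 a = a)
    (hma_mul : ∀ (h : H) (a b : A), act h (a * b) =
      LinearMap.mul' k A (TensorProduct.map (act.flip a) (act.flip b) (Coalgebra.comul h)))
    (hma_one : ∀ h : H, act h 1 = Coalgebra.counit (R := k) h • (1 : A))
    (σ : H) (hσ0 : σ ≠ 0) (hσ : Coalgebra.comul (R := k) σ = σ ⊗ₜ[k] σ)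
    (τ : A →ₗ[k] k)
    (htrace : ∀ a b : A, τ (a * b) = τ (b * act σ a)) :
    (∀ (h : H) (a : A), τ (act h a) = δ h * τ a) ↔
      (∀ (h : H) (a b : A), τ (act h a * b) = τ (a * act (twistedAntipode δ h) b)) :=
  delta_invariant_iff_integration_by_parts_general δ act hact_mul hact_one hma_mul hma_one τ
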